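/- arXiv:1805.06293 — 2 statements merged into one kernel-verified Lean document; each statement's English description precedes it below -/
import Mathlib

section
/- Let Γ be a group and let f : Γ → ℂ be a parallelogram function. Then the map (a,b,c) ↦ f∘ε₃(a,b,c) is an alternating trimorphism: it is a homomorphism in each variable, i.e. f∘ε₃(aa′,b,c) = f∘ε₃(a,b,c) + f∘ε₃(a′,b,c) and similarly in the second and third variables, and it is antisymmetric under any transposition of its three arguments; in particular f∘ε₃(a,b,c) + f∘ε₃(a,c,b) = 0 for all a, b, c ∈ Γ. -/
/-- The linearization of `f : Γ → ℂ` to a linear functional on the group algebra `ℂ[Γ]`. -/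
noncomputable def lin {Γ : Type*} [Group Γ] (f : Γ → ℂ) : MonoidAlgebra ℂ Γ →ₗ[ℂ] ℂ :=
  Finsupp.linearCombination ℂ f ∘ₗ (MonoidAlgebra.coeffLinearEquiv ℂ).toLinearMap

/-- `f∘ε₃(a,b,c) = f̂((a-1)(b-1)(c-1))`. -/
noncomputable def eps3 {Γ : Type*} [Group Γ] (f : Γ → ℂ) (a b c : Γ) : ℂ :=
  lin f ((MonoidAlgebra.of ℂ Γ a - 1) * (MonoidAlgebra.of ℂ Γ b - 1) *
    (MonoidAlgebra.of ℂ Γ c - 1))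

section Aux

variable {Γ : Type*} [Group Γ] (f : Γ → ℂ)
  (hf : ∀ x y : Γ, f (x * y) + f (x * y⁻¹) = 2 * f x + 2 * f y)

lemma lin_of' (x : Γ) : lin f (MonoidAlgebra.of ℂ Γ x) = f x := by
  show Finsupp.linearCombination ℂ f (Finsupp.single x 1) = f x
  rw [Finsupp.linearCombination_single, one_smul]

/-- The second-difference expression. -/
def Efun (f : Γ → ℂ) (a b c : Γ) : ℂ :=
  f (a*b*c) - f (a*b) - f (a*c) - f (b*c) + f a + f b + f c

lemma eps3_eq' (a b c : Γ) : eps3 f a b c = Efun f a b c - f 1 := by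
  have expand : (MonoidAlgebra.of ℂ Γ a - 1) * (MonoidAlgebra.of ℂ Γ b - 1) *
      (MonoidAlgebra.of ℂ Γ c - 1) =
      MonoidAlgebra.of ℂ Γ (a*b*c) - MonoidAlgebra.of ℂ Γ (a*b) - MonoidAlgebra.of ℂ Γ (a*c)
      - MonoidAlgebra.of ℂ Γ (b*c) + MonoidAlgebra.of ℂ Γ a + MonoidAlgebra.of ℂ Γ b
      + MonoidAlgebra.of ℂ Γ c - MonoidAlgebra.of ℂ Γ 1 := by
    simp only [map_mul, map_one]
    noncomm_ring
  rw [eps3, expand]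
  simp only [map_sub, map_add, lin_of']
  rw [Efun]

include hf

lemma h_one : f 1 = 0 := by
  have h := hf 1 1
  simp only [mul_one, inv_one] at h
  linear_combination (-1/2 : ℂ) * h

lemma h_inv (y : Γ) : f y⁻¹ = f y := by
  have h := hf 1 y
  have h0 := h_one f hf
  simp only [one_mul] at h
  linear_combination h + 2 * h0

lemma h_comm (x y : Γ) : f (x*y) = f (y*x) := by
  have h1 := hf x y
  have h2 := hf y x
  have h3 : f (x*y⁻¹) = f (y*x⁻¹) := by
    rw [← h_inv f hf (x*y⁻¹)]
    congr 1
    group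
  linear_combination h1 - h2 - h3

/-- The key parallelogram consequence. -/
lemma key (a b c : Γ) : f (a*b*c) + f (a*c*b)
    = 2*f (a*b) + 2*f (a*c) + 2*f (b*c) - 2*f a - 2*f b - 2*f c := by
  have h1 := hf (a*b) c
  have h2 := hf (a*c) b
  have h3 := hf a (b*c⁻¹)
  have h4 := hf b c
  have e1 : f (a*(b*c⁻¹)) = f (a*b*c⁻¹) := by rw [mul_assoc]
  have e2 : f (a*(b*c⁻¹)⁻¹) = f (a*c*b⁻¹) := by congr 1; group
  linear_combination h1 + h2 - h3 - 2*h4 + e1 + e2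

lemma swap23 (a b c : Γ) : Efun f a c b = - Efun f a b c := by
  unfold Efun
  have k := key f hf a b c
  have e1 : f (c*b) = f (b*c) := h_comm f hf c b
  linear_combination k - e1

lemma swap12 (a b c : Γ) : Efun f b a c = - Efun f a b c := by
  unfold Efun
  have k := key f hf a b c
  have e1 : f (b*a) = f (a*b) := h_comm f hf b a
  have e2 : f (b*(a*c)) = f (a*c*b) := h_comm f hf b (a*c)
  have e3 : f (b*a*c) = f (b*(a*c)) := by rw [mul_assoc]
  linear_combination k - e1 + e2 + e3

lemma swap13 (a b c : Γ) : Efun f c b a = - Efun f a b c := by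
  have u1 := swap12 f hf b c a
  have u2 := swap23 f hf b a c
  have u3 := swap12 f hf a b c
  linear_combination u1 - u2 + u3

omit hf in
/-- Cocycle identity: a purely formal identity of `Efun`. -/
lemma cocycle (a a' b c : Γ) :
    Efun f (a*a') b c + Efun f a a' c = Efun f a (a'*b) c + Efun f a' b c := by
  unfold Efun
  have e1 : f (a*(a'*b)*c) = f (a*a'*b*c) := by rw [mul_assoc a a' b]
  have e2 : f (a*(a'*b)) = f (a*a'*b) := by rw [mul_assoc]
  linear_combination -e1 + e2

lemma step (a a' b c : Γ) :
    Efun f (a*a') b c - Efun f a b c - Efun f a' b c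
      = -(Efun f (a'*b) a c - Efun f a' a c - Efun f b a c) := by
  have hc := cocycle f a a' b c
  have s1 := swap12 f hf a (a'*b) c
  have s2 := swap12 f hf a a' c
  have s3 := swap12 f hf a b c
  linear_combination hc + s1 - s2 - s3

lemma T_zero (a a' b c : Γ) :
    Efun f (a*a') b c = Efun f a b c + Efun f a' b c := by
  have t1 := step f hf a a' b c
  have t2 := step f hf a' b a c
  have t3 := step f hf b a a' c
  linear_combination (1/2 : ℂ) * (t1 - t2 + t3)

end Aux

theorem eps3_alternating_trimorphism {Γ : Type*} [Group Γ] (f : Γ → ℂ)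
    (hf : ∀ x y : Γ, f (x * y) + f (x * y⁻¹) = 2 * f x + 2 * f y) :
    (∀ a a' b c : Γ, eps3 f (a * a') b c = eps3 f a b c + eps3 f a' b c) ∧
    (∀ a b b' c : Γ, eps3 f a (b * b') c = eps3 f a b c + eps3 f a b' c) ∧
    (∀ a b c c' : Γ, eps3 f a b (c * c') = eps3 f a b c + eps3 f a b c') ∧
    (∀ a b c : Γ, eps3 f b a c = - eps3 f a b c) ∧
    (∀ a b c : Γ, eps3 f a c b = - eps3 f a b c) ∧
    (∀ a b c : Γ, eps3 f c b a = - eps3 f a b c) ∧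
    (∀ a b c : Γ, eps3 f a b c + eps3 f a c b = 0) := by
  have h0 := h_one f hf
  have he : ∀ a b c : Γ, eps3 f a b c = Efun f a b c := by
    intro a b c
    rw [eps3_eq' f a b c, h0, sub_zero]
  refine ⟨?_, ?_, ?_, ?_, ?_, ?_, ?_⟩
  · intro a a' b c
    simp only [he]
    exact T_zero f hf a a' b c
  · intro a b b' c
    simp only [he]
    have t := T_zero f hf b b' a c
    have s1 := swap12 f hf a (b*b') c
    have s2 := swap12 f hf a b c
    have s3 := swap12 f hf a b' c
    linear_combination -t + s1 - s2 - s3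
  · intro a b c c'
    simp only [he]
    have t := T_zero f hf c c' b a
    have s1 := swap13 f hf a b (c*c')
    have s2 := swap13 f hf a b c
    have s3 := swap13 f hf a b c'
    linear_combination -t + s1 - s2 - s3
  · intro a b c
    simp only [he]
    exact swap12 f hf a b c
  · intro a b c
    simp only [he]
    exact swap23 f hf a b c
  · intro a b c
    simp only [he]
    exact swap13 f hf a b c
  · intro a b c
    simp only [he]
    have := swap23 f hf a b c
    linear_combination this
end

section
/- Let Γ be a group, let n ≥ 1, and let f₁, …, fₙ : Γ → ℂ satisfy, for every k with 1 ≤ k ≤ n and all γ, δ ∈ Γ: f_k(γδ) + f_k(γδ⁻¹) = 2f_k(γ) + 2f_k(δ) + ∑_{j=1}^{k−1} binom(k,j)·f_j(γ)·f_{k−j}(δ). Then fₙ is a polynomial function of order less than 4ⁿ: for all γ₁, …, γ_{4ⁿ} ∈ Γ, the linearization f̂ₙ satisfies f̂ₙ((γ₁−1)(γ₂−1)⋯(γ_{4ⁿ}−1)) = 0. -/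
open MonoidAlgebra

section RightIdeal

variable {R A : Type*} [CommSemiring R] [Semiring A] [Algebra R A] {I : Submodule R A}

theorem Submodule.pow_mul_top_le (hI : I * ⊤ ≤ I) {n : ℕ} (hn : n ≠ 0) : I ^ n * ⊤ ≤ I ^ n := by
  obtain ⟨m, rfl⟩ := Nat.exists_eq_succ_of_ne_zero hn
  rw [pow_succ, mul_assoc]
  exact mul_le_mul_right hI _

theorem Submodule.pow_le_pow_of_mul_top_le (hI : I * ⊤ ≤ I) {m n : ℕ} (hm : m ≠ 0)
    (hmn : m ≤ n) : I ^ n ≤ I ^ m := by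
  obtain ⟨t, rfl⟩ := Nat.exists_eq_add_of_le hmn
  rw [pow_add]
  exact (mul_le_mul_right le_top _).trans (pow_mul_top_le hI hm)

end RightIdeal

theorem Submodule.list_prod_ofFn_mem_pow {R A : Type*} [CommSemiring R] [Semiring A]
    [Algebra R A] (M : Submodule R A) {n : ℕ} {x : Fin n → A} (hx : ∀ i, x i ∈ M) :
    (List.ofFn x).prod ∈ M ^ n := by
  rw [Submodule.pow_eq_span_pow_set]
  exact Submodule.subset_span (Set.mem_pow.2 ⟨fun i => ⟨x i, hx i⟩, rfl⟩)

section Antisymmetric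

variable {k A : Type*} [CommRing k] [Ring A] [Algebra k A]
  {S : A → A} {I J : Submodule k A} {g : A →ₗ[k] k}

theorem map_mul_mul_eq_neg_map_mul_mul (hS_mul : ∀ a b, S (a * b) = S b * S a)
    (hS_invol : ∀ a, S (S a) = a) (hI : I * ⊤ ≤ I) (hJ : J * ⊤ ≤ J)
    (hg : ∀ x ∈ J, ∀ a ∈ I, g (x * a) = -g (x * S a))
    {x a b : A} (hx : x ∈ J) (ha : a ∈ I) (hb : b ∈ I) :
    g (x * a * b) = -g (x * b * a) := by
  have hxa := hg (x * a) (hJ (Submodule.mul_mem_mul hx trivial)) b hb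
  have hxb := hg (x * b) (hJ (Submodule.mul_mem_mul hx trivial)) a ha
  have hx_aSb := hg x hx (a * S b) (hI (Submodule.mul_mem_mul ha trivial))
  rw [hS_mul, hS_invol, ← mul_assoc, ← mul_assoc] at hx_aSb
  linear_combination hxa - hx_aSb + hxb

theorem map_mul_mul_mul_eq_zero [IsDomain k] [NeZero (2 : k)]
    (hS_mul : ∀ a b, S (a * b) = S b * S a) (hS_invol : ∀ a, S (S a) = a)
    (hI : I * ⊤ ≤ I) (hJ : J * ⊤ ≤ J)
    (hg : ∀ x ∈ J, ∀ a ∈ I, g (x * a) = -g (x * S a))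
    {x a b c : A} (hx : x ∈ J) (ha : a ∈ I) (hb : b ∈ I) (hc : c ∈ I) :
    g (x * a * b * c) = 0 := by
  have hmul {u v : A} (hu : u ∈ I) : u * v ∈ I := hI (Submodule.mul_mem_mul hu trivial)
  have h₁ := map_mul_mul_eq_neg_map_mul_mul hS_mul hS_invol hI hJ hg hx ha (hmul (v := c) hb)
  have h₂ := map_mul_mul_eq_neg_map_mul_mul hS_mul hS_invol hI hJ hg hx hb (hmul (v := a) hc)
  have h₃ := map_mul_mul_eq_neg_map_mul_mul hS_mul hS_invol hI hJ hg hx hc (hmul (v := b) ha)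
  simp only [← mul_assoc] at h₁ h₂ h₃
  have h_two : 2 * g (x * a * b * c) = 0 := by linear_combination h₁ - h₂ + h₃
  exact (mul_eq_zero.1 h_two).resolve_left two_ne_zero

theorem mul_mul_mul_le_ker [IsDomain k] [NeZero (2 : k)]
    (hS_mul : ∀ a b, S (a * b) = S b * S a) (hS_invol : ∀ a, S (S a) = a)
    (hI : I * ⊤ ≤ I) (hJ : J * ⊤ ≤ J)
    (hg : ∀ x ∈ J, ∀ a ∈ I, g (x * a) = -g (x * S a)) :
    J * I * I * I ≤ LinearMap.ker g := by
  refine Submodule.mul_le.2 fun y hy c hc => ?_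
  suffices J * I * I ≤ LinearMap.ker (g ∘ₗ LinearMap.mulRight k c) from this hy
  refine Submodule.mul_le.2 fun z hz b hb => ?_
  suffices J * I ≤ LinearMap.ker (g ∘ₗ LinearMap.mulRight k c ∘ₗ LinearMap.mulRight k b) from
    this hz
  refine Submodule.mul_le.2 fun x hx a ha => ?_
  simpa [mul_assoc] using map_mul_mul_mul_eq_zero hS_mul hS_invol hI hJ hg hx ha hb hc

end Antisymmetric

namespace MonoidAlgebra

variable (k Γ : Type*) [CommRing k]

noncomputable def augIdeal [Monoid Γ] : Submodule k (MonoidAlgebra k Γ) :=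
  LinearMap.ker (Coalgebra.counit (R := k) (A := MonoidAlgebra k Γ))

variable {k Γ}

theorem of_sub_one_mem_augIdeal [Monoid Γ] (γ : Γ) : of k Γ γ - 1 ∈ augIdeal k Γ := by
  simp [augIdeal, of_apply]

theorem augIdeal_mul_top_le [Monoid Γ] : augIdeal k Γ * ⊤ ≤ augIdeal k Γ :=
  Submodule.mul_le.2 fun x hx r _ => by
    rw [augIdeal, LinearMap.mem_ker] at hx ⊢
    rw [Bialgebra.counit_mul, hx, zero_mul]

theorem augIdeal_pow_le_pow [Monoid Γ] {m n : ℕ} (hm : m ≠ 0) (hmn : m ≤ n) :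
    augIdeal k Γ ^ n ≤ augIdeal k Γ ^ m :=
  (augIdeal k Γ).pow_le_pow_of_mul_top_le augIdeal_mul_top_le hm hmn

theorem antipode_antipode [Group Γ] (x : MonoidAlgebra k Γ) :
    HopfAlgebra.antipode k (HopfAlgebra.antipode k x) = x := by
  induction x using MonoidAlgebra.induction_linear with
  | zero => simp
  | add x y hx hy => rw [map_add, map_add, hx, hy]
  | single γ a => simp [antipode_single, CommSemiring.antipode_eq_id]

end MonoidAlgebra

section Linearization

variable {Γ : Type*} [Group Γ]

theorem lin_single (f : Γ → ℂ) (γ : Γ) (a : ℂ) : lin f (single γ a) = a * f γ := by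
  simp [lin]

theorem lin_mul_add_lin_mul_antipode {F : Γ → ℂ} {ι : Type*} (s : Finset ι) (c : ι → ℂ)
    (u v : ι → Γ → ℂ)
    (hF : ∀ γ δ : Γ, F (γ * δ) + F (γ * δ⁻¹) = 2 * F γ + 2 * F δ + ∑ j ∈ s, c j * u j γ * v j δ)
    (x y : MonoidAlgebra ℂ Γ) :
    lin F (x * y) + lin F (x * HopfAlgebra.antipode ℂ y) =
      2 * Coalgebra.counit (R := ℂ) y * lin F x + 2 * Coalgebra.counit (R := ℂ) x * lin F y +
        ∑ j ∈ s, c j * lin (u j) x * lin (v j) y := by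
  induction x using MonoidAlgebra.induction_linear with
  | zero => simp
  | add x₁ x₂ h₁ h₂ =>
    simp only [add_mul, map_add, mul_add]
    rw [Finset.sum_add_distrib]
    linear_combination h₁ + h₂
  | single γ a =>
    induction y using MonoidAlgebra.induction_linear with
    | zero => simp
    | add y₁ y₂ h₁ h₂ =>
      simp only [mul_add, map_add, add_mul]
      rw [Finset.sum_add_distrib]
      linear_combination h₁ + h₂
    | single δ b =>
      simp only [antipode_single, CommSemiring.antipode_eq_id, single_mul_single, lin_single,
        counit_single, CommSemiring.counit_apply, LinearMap.id_apply]
      have hs : ∑ j ∈ s, c j * (a * u j γ) * (b * v j δ) =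
          a * b * ∑ j ∈ s, c j * u j γ * v j δ := by
        rw [Finset.mul_sum]
        exact Finset.sum_congr rfl fun j _ => by ring
      linear_combination a * b * hF γ δ - hs

open HopfAlgebra in
theorem lin_eq_zero_of_mem_augIdeal_pow_add_three {F : Γ → ℂ} {ι : Type*} (s : Finset ι)
    (c : ι → ℂ) (u v : ι → Γ → ℂ)
    (hF : ∀ γ δ : Γ, F (γ * δ) + F (γ * δ⁻¹) = 2 * F γ + 2 * F δ + ∑ j ∈ s, c j * u j γ * v j δ)
    {p : ℕ} (hp : p ≠ 0) (hu : ∀ j ∈ s, ∀ x ∈ augIdeal ℂ Γ ^ p, lin (u j) x = 0)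
    {x : MonoidAlgebra ℂ Γ} (hx : x ∈ augIdeal ℂ Γ ^ (p + 3)) : lin F x = 0 := by
  have hflip : ∀ x ∈ augIdeal ℂ Γ ^ p, ∀ y ∈ augIdeal ℂ Γ,
      lin F (x * y) = -lin F (x * antipode ℂ y) := by
    intro x hx y hy
    have hx₁ : x ∈ augIdeal ℂ Γ := by
      simpa using augIdeal_pow_le_pow one_ne_zero (Nat.one_le_iff_ne_zero.2 hp) hx
    have h := lin_mul_add_lin_mul_antipode s c u v hF x y
    rw [LinearMap.mem_ker.1 hx₁, LinearMap.mem_ker.1 hy,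
      Finset.sum_eq_zero fun j hj => by rw [hu j hj x hx, mul_zero, zero_mul]] at h
    linear_combination h
  have hker : augIdeal ℂ Γ ^ p * augIdeal ℂ Γ * augIdeal ℂ Γ * augIdeal ℂ Γ ≤
      LinearMap.ker (lin F) :=
    mul_mul_mul_le_ker antipode_mul_antidistrib antipode_antipode augIdeal_mul_top_le
      ((augIdeal ℂ Γ).pow_mul_top_le augIdeal_mul_top_le hp) hflip
  exact hker (by simpa only [pow_succ] using hx)

theorem lin_eq_zero_of_mem_augIdeal_pow_four_pow {n : ℕ} {f : ℕ → Γ → ℂ}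
    (hf : ∀ k, 1 ≤ k → k ≤ n → ∀ γ δ : Γ,
      f k (γ * δ) + f k (γ * δ⁻¹) =
        2 * f k γ + 2 * f k δ + ∑ j ∈ Finset.Ico 1 k, (k.choose j : ℂ) * f j γ * f (k - j) δ)
    {k : ℕ} (hk : 1 ≤ k) (hkn : k ≤ n) {x : MonoidAlgebra ℂ Γ}
    (hx : x ∈ augIdeal ℂ Γ ^ (4 ^ k)) : lin (f k) x = 0 := by
  induction k using Nat.strong_induction_on generalizing x with
  | _ k ih =>
  have hp : 4 ^ (k - 1) ≠ 0 := by positivity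
  have h4k : 4 ^ k = 4 * 4 ^ (k - 1) := by rw [← pow_succ', Nat.sub_add_cancel hk]
  refine lin_eq_zero_of_mem_augIdeal_pow_add_three (Finset.Ico 1 k) (fun j => (k.choose j : ℂ))
    f (fun j => f (k - j)) (hf k hk hkn) hp (fun j hj y hy => ?_)
    (augIdeal_pow_le_pow (by omega) (by omega) hx)
  obtain ⟨hj, hjk⟩ := Finset.mem_Ico.1 hj
  exact ih j hjk hj (by omega)
    (augIdeal_pow_le_pow (by positivity) (Nat.pow_le_pow_right (by norm_num) (by omega)) hy)

end Linearization

theorem jets_are_polynomial {Γ : Type*} [Group Γ] (n : ℕ) (hn : 1 ≤ n) (f : ℕ → Γ → ℂ)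
    (hf : ∀ k, 1 ≤ k → k ≤ n → ∀ γ δ : Γ,
      f k (γ * δ) + f k (γ * δ⁻¹) =
        2 * f k γ + 2 * f k δ +
          ∑ j ∈ Finset.Ico 1 k, (k.choose j : ℂ) * f j γ * f (k - j) δ) :
    ∀ γ : Fin (4 ^ n) → Γ,
      lin (f n) ((List.ofFn fun i => MonoidAlgebra.of ℂ Γ (γ i) - 1).prod) = 0 :=
  fun γ => lin_eq_zero_of_mem_augIdeal_pow_four_pow hf hn le_rfl
    (Submodule.list_prod_ofFn_mem_pow _ fun i => of_sub_one_mem_augIdeal (γ i))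
end
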